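/- arXiv:1902.07390 — 3 statements merged into one kernel-verified Lean document; each statement's English description precedes it below -/
import Mathlib

section
/- Suppose $g : [1,\infty) \to \mathbb{R}$ is a differentiable positive function, $p > 1$, and there exist constants $C_2, C_3 > 0$ such that $g(t) \geq C_2 t^{3(p-1)/2}$ and $g'(t) \geq C_3 t^{3p(1-p)/2} g(t)^p$ for all $t \geq 1$. If moreover $3p(1-p)/2 \geq -1$ (equivalently $p \leq 1 + \frac{2}{3p}$), then a contradiction follows; i.e., no such function $g$ exists. -/
/-!
For `t ≥ 1` the exponent condition gives `t ^ (3p(1-p)/2) ≥ t⁻¹`, so `g' ≥ C₃ t⁻¹ g ^ p`.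
Substituting `G = g ^ (1 - p)` linearises this into `G' ≤ -(p - 1) C₃ t⁻¹`, so
`g ^ (1 - p) + (p - 1) C₃ log t` is antitone; as `g ^ (1 - p) > 0`, this bounds `log t`, which is absurd.
-/

open Real Set Filter

theorem antitoneOn_rpow_one_sub_add_log {g : ℝ → ℝ} {a q c : ℝ} (ha : 0 < a) (hq : 1 < q)
    (hdiff : ∀ t ≥ a, DifferentiableAt ℝ g t) (hpos : ∀ t ≥ a, 0 < g t)
    (hderiv : ∀ t ≥ a, c * t⁻¹ * g t ^ q ≤ deriv g t) :
    AntitoneOn (fun t => g t ^ (1 - q) + (q - 1) * c * log t) (Ici a) := by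
  have hasDeriv : ∀ t ∈ Ici a, HasDerivAt (fun t => g t ^ (1 - q) + (q - 1) * c * log t)
      (deriv g t * (1 - q) * g t ^ (1 - q - 1) + (q - 1) * c * t⁻¹) t := fun t ht =>
    ((hdiff t ht).hasDerivAt.rpow_const (Or.inl (hpos t ht).ne')).add
      ((hasDerivAt_log (ha.trans_le ht).ne').const_mul _)
  refine antitoneOn_of_deriv_nonpos (convex_Ici a)
    (fun t ht => (hasDeriv t ht).continuousAt.continuousWithinAt)
    (fun t ht => (hasDeriv t (interior_subset ht)).differentiableAt.differentiableWithinAt)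
    fun t ht => ?_
  rw [interior_Ici] at ht
  have ht : a ≤ t := ht.le
  have hg := hpos t ht
  rw [(hasDeriv t ht).deriv, show 1 - q - 1 = -q by ring, rpow_neg hg.le]
  have hrate : c * t⁻¹ ≤ deriv g t * (g t ^ q)⁻¹ := by
    rw [le_mul_inv_iff₀ (rpow_pos_of_pos hg q)]
    exact hderiv t ht
  nlinarith

theorem exists_deriv_lt_inv_mul_rpow {g : ℝ → ℝ} {a q c : ℝ} (ha : 0 < a) (hq : 1 < q)
    (hc : 0 < c) (hdiff : ∀ t ≥ a, DifferentiableAt ℝ g t) (hpos : ∀ t ≥ a, 0 < g t) :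
    ∃ t ≥ a, deriv g t < c * t⁻¹ * g t ^ q := by
  by_contra! hderiv
  have hanti := antitoneOn_rpow_one_sub_add_log ha hq hdiff hpos hderiv
  obtain ⟨T, hTa, hT⟩ := ((eventually_ge_atTop a).and
    ((tendsto_log_atTop.const_mul_atTop (mul_pos (sub_pos.mpr hq) hc)).eventually_gt_atTop
      (g a ^ (1 - q) + (q - 1) * c * log a))).exists
  have hGT : g T ^ (1 - q) + (q - 1) * c * log T ≤ g a ^ (1 - q) + (q - 1) * c * log a :=
    hanti self_mem_Ici hTa hTa
  linarith [rpow_pos_of_pos (hpos T hTa) (1 - q)]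

theorem stmt_3_general (g : ℝ → ℝ) (p C3 : ℝ) (hp : 1 < p) (hC3 : 0 < C3)
    (hdiff : ∀ t ≥ (1:ℝ), DifferentiableAt ℝ g t)
    (hpos : ∀ t ≥ (1:ℝ), 0 < g t)
    (hderiv : ∀ t ≥ (1:ℝ), deriv g t ≥ C3 * t ^ (3 * p * (1 - p) / 2) * g t ^ p)
    (hcrit : 3 * p * (1 - p) / 2 ≥ -1) : False := by
  obtain ⟨t, ht, hlt⟩ := exists_deriv_lt_inv_mul_rpow one_pos hp hC3 hdiff hpos
  have hinv : t⁻¹ ≤ t ^ (3 * p * (1 - p) / 2) := by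
    rw [← rpow_neg_one]
    exact rpow_le_rpow_of_exponent_le ht hcrit
  have hgp := (rpow_pos_of_pos (hpos t ht) p).le
  linarith [hderiv t ht, mul_le_mul_of_nonneg_right (mul_le_mul_of_nonneg_left hinv hC3.le) hgp]

theorem stmt_3 (g : ℝ → ℝ) (p C2 C3 : ℝ) (hp : 1 < p) (hC2 : 0 < C2) (hC3 : 0 < C3)
    (hdiff : ∀ t ≥ (1:ℝ), DifferentiableAt ℝ g t)
    (hpos : ∀ t ≥ (1:ℝ), 0 < g t)
    (hlb : ∀ t ≥ (1:ℝ), g t ≥ C2 * t ^ (3 * (p - 1) / 2))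
    (hderiv : ∀ t ≥ (1:ℝ), deriv g t ≥ C3 * t ^ (3 * p * (1 - p) / 2) * g t ^ p)
    (hcrit : 3 * p * (1 - p) / 2 ≥ -1) : False :=
  stmt_3_general g p C3 hp hC3 hdiff hpos hderiv hcrit
end

section
/- Suppose $g : [2,\infty) \to \mathbb{R}$ is a differentiable positive function with $g(t) \geq C_7\, t \log t$ and $g'(t) \geq C\, t^{-5/3} g(t)^{5/3}$ for all $t \geq 2$, where $C_7, C > 0$. Then no such $g$ exists: integrating gives $\frac{3}{2} C_7^{-2/3} (t \log t)^{-2/3} \geq \frac{3C}{2}\left(t^{-2/3} - T^{-2/3}\right)$ for all $T > t \geq 2$, which fails for large $t$ after letting $T \to \infty$ since $(t\log t)^{-2/3} = o(t^{-2/3})$. -/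
/-! For `p > 1`, the substitution `u = g^(1-p)` turns `g' ≥ C t^(-p) g^p` into
`u' ≤ C (t^(1-p))'`, so `g^(1-p) - C t^(1-p)` is nonincreasing. As `g^(1-p) > 0` and
`t^(1-p) → 0`, this forces `g(t)^(1-p) ≥ C t^(1-p)`, i.e. the linear bound
`g(t) ≤ C^(1/(1-p)) t`, which is incompatible with `g(t) ≥ C₇ t log t`. -/

open Filter Set Real Topology

section

variable {g : ℝ → ℝ} {a C p : ℝ}

theorem antitoneOn_rpow_one_sub_sub_mul_rpow_of_deriv_ge (ha : 0 < a) (hp : 1 ≤ p)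
    (hdiff : ∀ t ≥ a, DifferentiableAt ℝ g t) (hpos : ∀ t ≥ a, 0 < g t)
    (hderiv : ∀ t ≥ a, C * t ^ (-p) * g t ^ p ≤ deriv g t) :
    AntitoneOn (fun t ↦ g t ^ (1 - p) - C * t ^ (1 - p)) (Ici a) := by
  have hasDeriv : ∀ t ≥ a, HasDerivAt (fun t ↦ g t ^ (1 - p) - C * t ^ (1 - p))
      ((1 - p) * (deriv g t * g t ^ (-p) - C * t ^ (-p))) t := by
    intro t ht
    have hg := (hdiff t ht).hasDerivAt.rpow_const (p := 1 - p) (Or.inl (hpos t ht).ne')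
    have hid := (hasDerivAt_rpow_const (p := 1 - p) (Or.inl (ha.trans_le ht).ne')).const_mul C
    rw [sub_sub_cancel_left] at hg hid
    exact (hg.sub hid).congr_deriv (by ring)
  refine antitoneOn_of_deriv_nonpos (convex_Ici a)
    (fun t ht ↦ (hasDeriv t ht).continuousAt.continuousWithinAt)
    (fun t ht ↦ (hasDeriv t (interior_subset ht)).differentiableAt.differentiableWithinAt)
    fun t ht ↦ ?_
  have ht : a ≤ t := interior_subset ht
  rw [(hasDeriv t ht).deriv]
  refine mul_nonpos_of_nonpos_of_nonneg (by linarith) (sub_nonneg.2 ?_)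
  have hgp : 0 < g t ^ (-p) := rpow_pos_of_pos (hpos t ht) _
  calc C * t ^ (-p) = C * t ^ (-p) * g t ^ p * g t ^ (-p) := by
        rw [mul_assoc _ (g t ^ p), ← rpow_add (hpos t ht), add_neg_cancel, rpow_zero, mul_one]
    _ ≤ deriv g t * g t ^ (-p) := mul_le_mul_of_nonneg_right (hderiv t ht) hgp.le

theorem mul_rpow_one_sub_le_rpow_one_sub_of_deriv_ge (ha : 0 < a) (hp : 1 < p)
    (hdiff : ∀ t ≥ a, DifferentiableAt ℝ g t) (hpos : ∀ t ≥ a, 0 < g t)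
    (hderiv : ∀ t ≥ a, C * t ^ (-p) * g t ^ p ≤ deriv g t) {t : ℝ} (ht : a ≤ t) :
    C * t ^ (1 - p) ≤ g t ^ (1 - p) := by
  have hanti := antitoneOn_rpow_one_sub_sub_mul_rpow_of_deriv_ge ha hp.le hdiff hpos hderiv
  have hlim : Tendsto (fun T : ℝ ↦ C * t ^ (1 - p) - C * T ^ (1 - p)) atTop
      (𝓝 (C * t ^ (1 - p) - C * 0)) := by
    rw [show 1 - p = -(p - 1) by ring]
    exact tendsto_const_nhds.sub ((tendsto_rpow_neg_atTop (by linarith)).const_mul C)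
  rw [mul_zero, sub_zero] at hlim
  refine le_of_tendsto hlim ((eventually_ge_atTop t).mono fun T hT ↦ ?_)
  have hFT := hanti ht (ht.trans hT) hT
  have hgT : 0 < g T ^ (1 - p) := rpow_pos_of_pos (hpos T (ht.trans hT)) _
  dsimp only at hFT
  linarith

theorem le_rpow_mul_of_deriv_ge (ha : 0 < a) (hp : 1 < p) (hC : 0 < C)
    (hdiff : ∀ t ≥ a, DifferentiableAt ℝ g t) (hpos : ∀ t ≥ a, 0 < g t)
    (hderiv : ∀ t ≥ a, C * t ^ (-p) * g t ^ p ≤ deriv g t) {t : ℝ} (ht : a ≤ t) :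
    g t ≤ C ^ (1 - p)⁻¹ * t := by
  have ht0 : 0 < t := ha.trans_le ht
  have hc : 1 - p ≠ 0 := by linarith
  have h := rpow_le_rpow_of_nonpos (by positivity)
    (mul_rpow_one_sub_le_rpow_one_sub_of_deriv_ge ha hp hdiff hpos hderiv ht)
    (inv_nonpos.2 (by linarith) : (1 - p)⁻¹ ≤ 0)
  rwa [rpow_rpow_inv (hpos t ht).le hc, mul_rpow hC.le (by positivity),
    rpow_rpow_inv ht0.le hc] at h

end

theorem stmt_10 (g : ℝ → ℝ) (C7 C : ℝ) (hC7 : 0 < C7) (hC : 0 < C)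
    (hdiff : ∀ t ≥ (2:ℝ), DifferentiableAt ℝ g t)
    (hpos : ∀ t ≥ (2:ℝ), 0 < g t)
    (hlb : ∀ t ≥ (2:ℝ), g t ≥ C7 * t * Real.log t)
    (hderiv : ∀ t ≥ (2:ℝ), deriv g t ≥ C * t ^ (-(5:ℝ) / 3) * g t ^ ((5:ℝ) / 3)) :
    False := by
  have hderiv' : ∀ t ≥ (2:ℝ), C * t ^ (-(5 / 3 : ℝ)) * g t ^ (5 / 3 : ℝ) ≤ deriv g t := by
    simpa only [neg_div] using hderiv
  set K := C ^ (1 - 5 / 3 : ℝ)⁻¹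
  obtain ⟨t, hlog, ht⟩ :=
    ((tendsto_log_atTop.eventually_gt_atTop (K / C7)).and (eventually_ge_atTop 2)).exists
  have hup : g t ≤ K * t :=
    le_rpow_mul_of_deriv_ge two_pos (by norm_num) hC hdiff hpos hderiv' ht
  rw [div_lt_iff₀ hC7] at hlog
  nlinarith [hlb t ht]
end

section
/- Let $K(t,x_1,x_2) = \frac{1}{2\pi t^{3/2}}\exp(-x_1^2/t - x_2^2/t^2)$ for $t > 0$. Then for $0 < s < t$ and any $y \in \mathbb{R}^2$: $\int_{\mathbb{R}^2} K(t, x) K(t-s, x - y)\,dx \geq c\, \frac{s^{3/2}}{t^{3/2}} K(s, y)$ for some absolute constant $c > 0$. -/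
/-!
Both exponent inequalities `x₁²/t ≤ y₁²/s + (x₁-y₁)²/(t-s)` and
`x₂²/t² ≤ y₂²/s² + (x₂-y₂)²/(t-s)²` bound the integrand below by
`(2π t^{3/2})⁻¹ (2π (t-s)^{3/2})⁻¹ e^{-y₁²/s - y₂²/s²}` times the Gaussian
`e^{-2(x₁-y₁)²/(t-s) - 2(x₂-y₂)²/(t-s)²}`, whose integral is `(π/2)(t-s)^{3/2}`.
The resulting lower bound is exactly `c = 1/4` times the right-hand side.
-/

open Real MeasureTheory

noncomputable def K (t x1 x2 : ℝ) : ℝ :=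
  1 / (2 * Real.pi * t ^ ((3:ℝ) / 2)) * Real.exp (-(x1 ^ 2 / t) - x2 ^ 2 / t ^ 2)

-- `y²/p + z²/q - (y+z)²/(p+q) = (q y - p z)² / (p q (p+q))`
lemma sq_div_add_le {p q : ℝ} (hp : 0 < p) (hq : 0 < q) (x y : ℝ) :
    x ^ 2 / (p + q) ≤ y ^ 2 / p + (x - y) ^ 2 / q := by
  rw [div_add_div _ _ hp.ne' hq.ne', div_le_div_iff₀ (by positivity) (by positivity)]
  nlinarith [sq_nonneg (q * y - p * (x - y))]

lemma sq_div_sq_le {s t : ℝ} (hs : 0 < s) (hst : s < t) (x y : ℝ) :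
    x ^ 2 / t ^ 2 ≤ y ^ 2 / s ^ 2 + (x - y) ^ 2 / (t - s) ^ 2 :=
  calc x ^ 2 / t ^ 2 ≤ x ^ 2 / (s ^ 2 + (t - s) ^ 2) :=
        div_le_div_of_nonneg_left (sq_nonneg x) (by nlinarith) (by nlinarith)
    _ ≤ _ := sq_div_add_le (by positivity) (by nlinarith) x y

lemma K_eq (t x1 x2 : ℝ) :
    K t x1 x2 = 1 / (2 * π * t ^ ((3:ℝ) / 2)) *
      (exp (-t⁻¹ * x1 ^ 2) * exp (-(t ^ 2)⁻¹ * x2 ^ 2)) := by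
  rw [K, sub_eq_add_neg, exp_add]
  ring_nf

lemma K_nonneg {t : ℝ} (ht : 0 ≤ t) (x1 x2 : ℝ) : 0 ≤ K t x1 x2 := by
  unfold K
  positivity

lemma K_le {t : ℝ} (ht : 0 ≤ t) (x1 x2 : ℝ) : K t x1 x2 ≤ 1 / (2 * π * t ^ ((3:ℝ) / 2)) := by
  refine mul_le_of_le_one_right (by positivity) (exp_le_one_iff.2 ?_)
  have : 0 ≤ x1 ^ 2 / t := by positivity
  have : 0 ≤ x2 ^ 2 / t ^ 2 := by positivity
  linarith

lemma integrable_K {t : ℝ} (ht : 0 < t) : Integrable (fun x : ℝ × ℝ => K t x.1 x.2) := by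
  simp only [K_eq]
  exact ((integrable_exp_neg_mul_sq (inv_pos.2 ht)).mul_prod
    (integrable_exp_neg_mul_sq (inv_pos.2 (pow_pos ht 2)))).const_mul _

lemma integrable_K_mul_K_sub {t b : ℝ} (ht : 0 < t) (hb : 0 ≤ b) (y : ℝ × ℝ) :
    Integrable (fun x : ℝ × ℝ => K t x.1 x.2 * K b (x.1 - y.1) (x.2 - y.2)) :=
  (integrable_K ht).mul_bdd (by unfold K; fun_prop) <| ae_of_all _ fun x => by
    rw [norm_of_nonneg (K_nonneg hb _ _)]
    exact K_le hb _ _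

lemma integrable_exp_neg_mul_sq_prod {a c : ℝ} (ha : 0 < a) (hc : 0 < c) :
    Integrable (fun z : ℝ × ℝ => exp (-a * z.1 ^ 2) * exp (-c * z.2 ^ 2)) :=
  (integrable_exp_neg_mul_sq ha).mul_prod (integrable_exp_neg_mul_sq hc)

lemma integral_exp_neg_mul_sq_prod (a c : ℝ) :
    ∫ z : ℝ × ℝ, exp (-a * z.1 ^ 2) * exp (-c * z.2 ^ 2) = √(π / a) * √(π / c) := by
  rw [Measure.volume_eq_prod,
    integral_prod_mul (fun u => exp (-a * u ^ 2)) (fun u => exp (-c * u ^ 2)),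
    integral_gaussian, integral_gaussian]

lemma K_mul_K_sub_ge {s t : ℝ} (hs : 0 < s) (hst : s < t) (x y : ℝ × ℝ) :
    1 / (2 * π * t ^ ((3:ℝ) / 2)) * (1 / (2 * π * (t - s) ^ ((3:ℝ) / 2))) *
        exp (-(y.1 ^ 2 / s) - y.2 ^ 2 / s ^ 2) *
        (exp (-(2 / (t - s)) * (x.1 - y.1) ^ 2) * exp (-(2 / (t - s) ^ 2) * (x.2 - y.2) ^ 2)) ≤
      K t x.1 x.2 * K (t - s) (x.1 - y.1) (x.2 - y.2) := by
  have ht : 0 < t := hs.trans hst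
  have hb : 0 < t - s := sub_pos.2 hst
  have hx₁ := sq_div_add_le hs hb x.1 y.1
  rw [add_sub_cancel] at hx₁
  have hx₂ := sq_div_sq_le hs hst x.2 y.2
  have hz₁ : 2 / (t - s) * (x.1 - y.1) ^ 2 = 2 * ((x.1 - y.1) ^ 2 / (t - s)) := by ring
  have hz₂ : 2 / (t - s) ^ 2 * (x.2 - y.2) ^ 2 = 2 * ((x.2 - y.2) ^ 2 / (t - s) ^ 2) := by ring
  rw [K, K, mul_mul_mul_comm (1 / (2 * π * t ^ ((3:ℝ) / 2))), ← exp_add, mul_assoc, ← exp_add,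
    ← exp_add]
  exact mul_le_mul_of_nonneg_left (exp_le_exp.2 (by linarith)) (by positivity)

lemma sqrt_pi_div_mul_sqrt_pi_div {b : ℝ} (hb : 0 < b) :
    √(π / (2 / b)) * √(π / (2 / b ^ 2)) = π / 2 * b ^ ((3:ℝ) / 2) := by
  have hb32 : (b ^ ((3:ℝ) / 2)) ^ 2 = b ^ 3 := by
    rw [← rpow_natCast, ← rpow_mul hb.le]
    norm_num
  rw [← sqrt_mul (by positivity), ← sqrt_sq (by positivity : 0 ≤ π / 2 * b ^ ((3:ℝ) / 2)),
    mul_pow, hb32]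
  congr 1
  field_simp

theorem stmt_17 :
    ∃ c > (0:ℝ), ∀ s t : ℝ, 0 < s → s < t → ∀ y : ℝ × ℝ,
      (∫ x : ℝ × ℝ, K t x.1 x.2 * K (t - s) (x.1 - y.1) (x.2 - y.2)) ≥
        c * (s ^ ((3:ℝ) / 2) / t ^ ((3:ℝ) / 2)) * K s y.1 y.2 := by
  refine ⟨1 / 4, by norm_num, fun s t hs hst y => ?_⟩
  have ht : 0 < t := hs.trans hst
  have hb : 0 < t - s := sub_pos.2 hst
  set C := 1 / (2 * π * t ^ ((3:ℝ) / 2)) * (1 / (2 * π * (t - s) ^ ((3:ℝ) / 2))) *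
    exp (-(y.1 ^ 2 / s) - y.2 ^ 2 / s ^ 2) with hC
  have hgauss := integrable_exp_neg_mul_sq_prod (div_pos two_pos hb) (div_pos two_pos (pow_pos hb 2))
  calc 1 / 4 * (s ^ ((3:ℝ) / 2) / t ^ ((3:ℝ) / 2)) * K s y.1 y.2
      = C * (√(π / (2 / (t - s))) * √(π / (2 / (t - s) ^ 2))) := by
        have := rpow_pos_of_pos hs ((3:ℝ) / 2)
        have := rpow_pos_of_pos hb ((3:ℝ) / 2)
        have := rpow_pos_of_pos ht ((3:ℝ) / 2)
        rw [sqrt_pi_div_mul_sqrt_pi_div hb, K, hC]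
        field_simp
        ring
    _ = ∫ x : ℝ × ℝ, C * (exp (-(2 / (t - s)) * (x - y).1 ^ 2) *
          exp (-(2 / (t - s) ^ 2) * (x - y).2 ^ 2)) := by
        rw [integral_const_mul, integral_sub_right_eq_self
          (fun z : ℝ × ℝ => exp (-(2 / (t - s)) * z.1 ^ 2) * exp (-(2 / (t - s) ^ 2) * z.2 ^ 2)),
          integral_exp_neg_mul_sq_prod]
    _ ≤ ∫ x : ℝ × ℝ, K t x.1 x.2 * K (t - s) (x.1 - y.1) (x.2 - y.2) :=
        integral_mono ((hgauss.comp_sub_right y).const_mul C) (integrable_K_mul_K_sub ht hb.le y)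
          fun x => K_mul_K_sub_ge hs hst x y
end
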